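/- Let δ be a symbolic 2-dissimilarity on a finite set X (|X| ≥ 3) with values in M ∪ {⊙}. There exists a discriminating symbolic tree representation of δ if and only if δ is a symbolic ultrametric, i.e., (U1) for all distinct x,y,z ∈ X, |{δ(x,y), δ(x,z), δ(y,z)}| ≤ 2, and (U2) there are no four distinct elements x,y,z,u ∈ X with δ(x,y) = δ(y,z) = δ(z,u) ≠ δ(z,x) = δ(x,u) = δ(u,y). -/

import Mathlib

/-- A rooted phylogenetic network on leaf set `X`: a rooted DAG whose leaves are
identified with `X`, with no vertex of indegree one and outdegree one. -/
structure PhyloNetwork (X : Type) [Fintype X] [DecidableEq X] where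
  V : Type
  [instFin : Fintype V]
  [instDec : DecidableEq V]
  adj : V → V → Prop
  root : V
  leaf : X → V
  acyclic : ∀ v : V, ¬ Relation.TransGen adj v v
  root_no_in : ∀ u : V, ¬ adj u root
  connected : ∀ v : V, Relation.ReflTransGen adj root v
  leaf_inj : Function.Injective leaf
  leaf_no_out : ∀ (x : X) (w : V), ¬ adj (leaf x) w
  leaves_only : ∀ v : V, (∀ w : V, ¬ adj v w) → v = root ∨ ∃ x, leaf x = v
  no_inout_one : ∀ v : V, ¬ ((∃! u : V, adj u v) ∧ (∃! w : V, adj v w))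

namespace PhyloNetwork

variable {X : Type} [Fintype X] [DecidableEq X]

/-- Reachability by a directed path. -/
def reaches (N : PhyloNetwork X) : N.V → N.V → Prop := Relation.ReflTransGen N.adj

/-- The offspring set of a vertex: all leaves below it. -/
def F (N : PhyloNetwork X) (v : N.V) : Set X := {x | N.reaches v (N.leaf x)}

/-- `v` is a leaf vertex. -/
def IsLeafV (N : PhyloNetwork X) (v : N.V) : Prop := ∃ x, N.leaf x = v

/-- `v` is a lowest common ancestor of the set `Y` of leaves. -/
def IsLca (N : PhyloNetwork X) (Y : Finset X) (v : N.V) : Prop :=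
  (∀ x ∈ Y, x ∈ N.F v) ∧ ∀ w : N.V, N.adj v w → ¬ (∀ x ∈ Y, x ∈ N.F w)

/-- A cycle of a (level-1) network: two edge-disjoint, internally vertex-disjoint
directed paths from a root `r` to a hybrid `h`, with at least 3 vertices in total.
`side1` and `side2` list the internal vertices of the two sides in order. -/
structure NCycle (N : PhyloNetwork X) where
  r : N.V
  h : N.V
  side1 : List N.V
  side2 : List N.V
  chain1 : List.Chain N.adj r (side1 ++ [h])
  chain2 : List.Chain N.adj r (side2 ++ [h])
  ne : r ≠ h
  nodup1 : (r :: (side1 ++ [h])).Nodup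
  nodup2 : (r :: (side2 ++ [h])).Nodup
  disj : ∀ v ∈ side1, v ∉ side2
  nontriv : side1 ≠ [] ∨ side2 ≠ []

/-- The vertex set of a cycle. -/
def NCycle.verts {N : PhyloNetwork X} (C : NCycle N) : Set N.V :=
  {C.r, C.h} ∪ {v | v ∈ C.side1} ∪ {v | v ∈ C.side2}

/-- A level-1 network: every vertex belongs to at most one cycle. -/
def IsLevelOne (N : PhyloNetwork X) : Prop :=
  ∀ C C' : NCycle N, ∀ v : N.V, v ∈ C.verts → v ∈ C'.verts → C.verts = C'.verts

/-- `R(C)`: the leaves below the root of the cycle `C`. -/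
def NCycle.RC {N : PhyloNetwork X} (C : NCycle N) : Set X := N.F C.r

/-- `H(C)`: the leaves below the hybrid of the cycle `C`. -/
def NCycle.HC {N : PhyloNetwork X} (C : NCycle N) : Set X := N.F C.h

/-- `v` is the last ancestor `v_C(x)` of the leaf `x` lying in the cycle `C`. -/
def NCycle.LastAnc {N : PhyloNetwork X} (C : NCycle N) (v : N.V) (x : X) : Prop :=
  v ∈ C.verts ∧ N.reaches v (N.leaf x) ∧
    ∀ w ∈ C.verts, N.reaches w (N.leaf x) → N.reaches w v

end PhyloNetwork

/-- A symbolic 3-dissimilarity on `X` with values in `M ∪ {⊙}` (`⊙` = `none`):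
singletons get `⊙`, sets of size 2 or 3 get values in `M`. -/
structure SymbolicDissim3 (X M : Type) [DecidableEq X] where
  val : Finset X → Option M
  singleton_none : ∀ A : Finset X, A.card = 1 → val A = none
  pair_some : ∀ A : Finset X, A.card = 2 ∨ A.card = 3 → val A ≠ none

/-- The labelled network `(N,t)` represents `δ`: for every `Y ⊆ X` of size 2 or 3,
`δ(Y) = t(lca_N(Y))`. -/
def PhyloNetwork.Represents {X M : Type} [Fintype X] [DecidableEq X]
    (N : PhyloNetwork X) (t : N.V → M) (d : SymbolicDissim3 X M) : Prop :=
  ∀ Y : Finset X, Y.card = 2 ∨ Y.card = 3 → ∀ v : N.V, N.IsLca Y v → d.val Y = some (t v)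

/-- `δ` is level-1 representable. -/
def SymbolicDissim3.LevelOneRepresentable {X M : Type} [Fintype X] [DecidableEq X]
    (d : SymbolicDissim3 X M) : Prop :=
  ∃ (N : PhyloNetwork X) (t : N.V → M), N.IsLevelOne ∧ N.Represents t d

/-- A symbolic 2-dissimilarity on `X` with values in `M ∪ {⊙}` (`⊙` = `none`). -/
structure SymbolicDissim2 (X M : Type) [DecidableEq X] where
  val : Finset X → Option M
  singleton_none : ∀ A : Finset X, A.card = 1 → val A = none
  pair_some : ∀ A : Finset X, A.card = 2 → val A ≠ none

namespace PhyloNetwork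

variable {X M : Type} [Fintype X] [DecidableEq X]

/-- `N` is a rooted (phylogenetic) tree: every non-root vertex has a unique parent. -/
def IsRootedTree (N : PhyloNetwork X) : Prop :=
  ∀ v : N.V, v ≠ N.root → ∃! u : N.V, N.adj u v

/-- `(N,t)` is a symbolic representation of the 2-dissimilarity `d`:
`d(x,y) = t(lca(x,y))` for all distinct leaves `x,y`. -/
def Represents2 (N : PhyloNetwork X) (t : N.V → M) (d : SymbolicDissim2 X M) : Prop :=
  ∀ Y : Finset X, Y.card = 2 → ∀ v : N.V, N.IsLca Y v → d.val Y = some (t v)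

/-- The labelling `t` is discriminating: adjacent interior vertices have
different labels. -/
def Discriminating (N : PhyloNetwork X) (t : N.V → M) : Prop :=
  ∀ u v : N.V, N.adj u v → ¬ N.IsLeafV v → t u ≠ t v

end PhyloNetwork

/-!
In a rooted tree, of the three pairwise lowest common ancestors of three leaves two coincide and
lie strictly above the third. This gives (U1) for a tree representation, and for a bicoloured
`P₄` `x y z u` the odd pairs of the triples `xyz`, `xuy`, `zxu` force the directed cycle
`lca x u → lca x y → lca x z = lca x u`.

Conversely, under (U1) and (U2) every `A` with `2 ≤ #A` has a cut of some colour `m`: a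
partition into two nonempty parts all of whose cross pairs have colour `m`. When a point `p` is
added to a set with a cut of colour `m`, either `p` joins one side, or (U1) forces all pairs `p z`
not of colour `m` to share one colour `a`; then (U2) makes the points `z` with `p z` of colour `m`
one side of a cut of colour `m` (or, if there are none, `{p}` a side of a cut of colour `a`).
Fixing such a colour `μ A` for every `A` and splitting `A` into the connected components of the
pairs of colour `≠ μ A`, recursively from `X`, yields a hierarchy whose tree, labelled by `μ`,
represents `δ`. It is discriminating because a child is connected by pairs of colour `≠ μ A`,
so it has no cut of colour `μ A`.
-/

open Finset Relation

lemma Finset.card_triple_le_two_iff {α : Type*} [DecidableEq α] {a b c : α} :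
    ({a, b, c} : Finset α).card ≤ 2 ↔ a = b ∨ a = c ∨ b = c := by
  refine ⟨fun h => ?_, ?_⟩
  · by_contra! hne
    have := card_eq_three.2 ⟨a, b, c, hne.1, hne.2.1, hne.2.2, rfl⟩
    omega
  · rintro (rfl | rfl | rfl) <;> simp [card_le_two]

namespace SymbolicDissim2

variable {X M : Type} [DecidableEq X] (d : SymbolicDissim2 X M)

lemma ne_of_val_eq_some {x y : X} {m : M} (h : d.val {x, y} = some m) : x ≠ y := by
  rintro rfl
  simp [d.singleton_none {x} (card_singleton x)] at h

lemma exists_val_eq_some {x y : X} (h : x ≠ y) : ∃ m, d.val {x, y} = some m :=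
  Option.ne_none_iff_exists'.1 (d.pair_some _ (card_pair h))

/-- Condition (U1). -/
def RainbowFree : Prop :=
  ∀ x y z : X, x ≠ y → x ≠ z → y ≠ z →
    d.val {x, y} = d.val {x, z} ∨ d.val {x, y} = d.val {y, z} ∨ d.val {x, z} = d.val {y, z}

/-- The configuration excluded by (U2). -/
def HasBicolouredP4 : Prop :=
  ∃ x y z u : X, x ≠ y ∧ x ≠ z ∧ x ≠ u ∧ y ≠ z ∧ y ≠ u ∧ z ≠ u ∧
    d.val {x, y} = d.val {y, z} ∧ d.val {y, z} = d.val {z, u} ∧ d.val {z, u} ≠ d.val {z, x} ∧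
    d.val {z, x} = d.val {x, u} ∧ d.val {x, u} = d.val {u, y}

variable {d}

lemma RainbowFree.val_eq_of_ne {p x y : X} {m : M} (hd : d.RainbowFree)
    (hxy : d.val {x, y} = some m) (hpx : d.val {p, x} ≠ some m) (hpy : d.val {p, y} ≠ some m) :
    d.val {p, x} = d.val {p, y} := by
  have hpx' : p ≠ x := by rintro rfl; exact hpy hxy
  have hpy' : p ≠ y := by rintro rfl; rw [pair_comm] at hxy; exact hpx hxy
  rcases hd p x y hpx' hpy' (d.ne_of_val_eq_some hxy) with h | h | h
  · exact h
  · exact absurd (h.trans hxy) hpx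
  · exact absurd (h.trans hxy) hpy

lemma hasBicolouredP4_of_val_eq {x y z u : X} {a b : M} (hab : a ≠ b)
    (hxy : d.val {x, y} = some a) (hyz : d.val {y, z} = some a) (hzu : d.val {z, u} = some a)
    (hzx : d.val {z, x} = some b) (hxu : d.val {x, u} = some b) (huy : d.val {u, y} = some b) :
    d.HasBicolouredP4 :=
  ⟨x, y, z, u, d.ne_of_val_eq_some hxy, (d.ne_of_val_eq_some hzx).symm, d.ne_of_val_eq_some hxu,
    d.ne_of_val_eq_some hyz, (d.ne_of_val_eq_some huy).symm, d.ne_of_val_eq_some hzu,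
    hxy.trans hyz.symm, hyz.trans hzu.symm, by rw [hzu, hzx]; simpa using hab,
    hzx.trans hxu.symm, hxu.trans huy.symm⟩

variable (d)

structure IsCut (m : M) (A B : Finset X) : Prop where
  subset : B ⊆ A
  nonempty : B.Nonempty
  sdiff_nonempty : (A \ B).Nonempty
  val_eq : ∀ x ∈ B, ∀ y ∈ A \ B, d.val {x, y} = some m

variable {d} {m : M} {A B : Finset X}

lemma IsCut.compl (h : d.IsCut m A B) : d.IsCut m A (A \ B) where
  subset := sdiff_subset
  nonempty := h.sdiff_nonempty
  sdiff_nonempty := by rw [Finset.sdiff_sdiff_eq_self h.subset]; exact h.nonempty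
  val_eq x hx y hy := by
    rw [Finset.sdiff_sdiff_eq_self h.subset] at hy
    rw [pair_comm]
    exact h.val_eq y hy x hx

lemma IsCut.ssubset (h : d.IsCut m A B) : B ⊂ A :=
  Finset.ssubset_iff_subset_ne.2 ⟨h.subset, fun hBA => by simpa [hBA] using h.sdiff_nonempty⟩

lemma IsCut.val_eq_of_mem_iff_notMem (h : d.IsCut m A B) {x y : X} (hx : x ∈ A) (hy : y ∈ A)
    (hxy : x ∈ B ↔ y ∉ B) : d.val {x, y} = some m := by
  by_cases hxB : x ∈ B
  · exact h.val_eq x hxB y (mem_sdiff.2 ⟨hy, hxy.1 hxB⟩)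
  · rw [pair_comm]
    exact h.val_eq y (by tauto) x (mem_sdiff.2 ⟨hx, hxB⟩)

lemma isCut_insert_singleton {p : X} {a : M} (hp : p ∉ A) (hA : A.Nonempty)
    (h : ∀ y ∈ A, d.val {p, y} = some a) : d.IsCut a (insert p A) {p} where
  subset := singleton_subset_iff.2 (mem_insert_self p A)
  nonempty := singleton_nonempty p
  sdiff_nonempty := by rwa [sdiff_singleton_eq_erase, erase_insert hp]
  val_eq x hx y hy := by
    rw [mem_singleton.1 hx]
    rw [sdiff_singleton_eq_erase, erase_insert hp] at hy
    exact h y hy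

lemma IsCut.insert_of_forall {p : X} (hB : d.IsCut m A B) (hp : p ∉ A)
    (h : ∀ x ∈ B, d.val {p, x} = some m) : d.IsCut m (insert p A) B where
  subset := hB.subset.trans (subset_insert p A)
  nonempty := hB.nonempty
  sdiff_nonempty := hB.sdiff_nonempty.mono (sdiff_subset_sdiff (subset_insert p A) le_rfl)
  val_eq x hx y hy := by
    obtain ⟨hy, hyB⟩ := mem_sdiff.1 hy
    rcases mem_insert.1 hy with rfl | hyA
    · rw [pair_comm]; exact h x hx
    · exact hB.val_eq x hx y (mem_sdiff.2 ⟨hyA, hyB⟩)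

/-- Otherwise `y, x, p, w` would be a bicoloured `P₄`. -/
lemma IsCut.val_eq_of_not_hasBicolouredP4 (hd₁ : d.RainbowFree) (hd₂ : ¬ d.HasBicolouredP4)
    (hB : d.IsCut m A B) {p x y w : X} {a : M} (ham : a ≠ m) (hx : x ∈ A) (hy : y ∈ A)
    (hw : w ∈ A) (hwx : w ∈ B ↔ x ∉ B) (hpx : d.val {p, x} = some a)
    (hpy : d.val {p, y} = some m) (hpw : d.val {p, w} = some a) : d.val {x, y} = some m := by
  by_cases hxy : x ∈ B ↔ y ∉ B
  · exact hB.val_eq_of_mem_iff_notMem hx hy hxy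
  by_contra hne
  have hxp : d.val {x, p} = some a := by rw [pair_comm]; exact hpx
  have hyx : d.val {y, x} = some a := by
    rw [pair_comm, ← hd₁.val_eq_of_ne hpy (by rw [hxp]; simpa using ham) hne, hxp]
  refine hd₂ (hasBicolouredP4_of_val_eq ham hyx hxp hpw hpy ?_ ?_)
  · exact hB.val_eq_of_mem_iff_notMem hy hw (by tauto)
  · exact hB.val_eq_of_mem_iff_notMem hw hx (by tauto)

lemma IsCut.exists_isCut_insert_of_ne (hd₁ : d.RainbowFree) (hd₂ : ¬ d.HasBicolouredP4)
    (hB : d.IsCut m A B) {p x₀ y₀ : X} (hp : p ∉ A) (hx₀ : x₀ ∈ B) (hy₀ : y₀ ∈ A \ B)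
    (hpx₀ : d.val {p, x₀} ≠ some m) (hpy₀ : d.val {p, y₀} ≠ some m) :
    ∃ m' B', d.IsCut m' (insert p A) B' := by
  classical
  obtain ⟨a, ha⟩ := d.exists_val_eq_some (ne_of_mem_of_not_mem (hB.subset hx₀) hp).symm
  have ham : a ≠ m := by rintro rfl; exact hpx₀ ha
  have hy₀B := (mem_sdiff.1 hy₀).2
  have hpy₀a : d.val {p, y₀} = some a :=
    ha ▸ (hd₁.val_eq_of_ne (hB.val_eq x₀ hx₀ y₀ hy₀) hpx₀ hpy₀).symm
  have hval : ∀ z ∈ A, d.val {p, z} ≠ some m → d.val {p, z} = some a := by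
    intro z hz hpz
    by_cases hzB : z ∈ B
    · rw [← hpy₀a]
      exact hd₁.val_eq_of_ne (hB.val_eq z hzB y₀ hy₀) hpz hpy₀
    · rw [← ha]
      exact (hd₁.val_eq_of_ne (hB.val_eq x₀ hx₀ z (mem_sdiff.2 ⟨hz, hzB⟩)) hpx₀ hpz).symm
  set S := A.filter (fun z => d.val {p, z} = some m)
  rcases S.eq_empty_or_nonempty with hS | hS
  · refine ⟨a, {p}, isCut_insert_singleton hp ⟨x₀, hB.subset hx₀⟩ fun z hz => hval z hz ?_⟩
    exact fun hpz => eq_empty_iff_forall_notMem.1 hS z (mem_filter.2 ⟨hz, hpz⟩)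
  have hSA : S ⊆ insert p A := (filter_subset _ A).trans (subset_insert p A)
  refine ⟨m, insert p A \ S, sdiff_subset, ⟨p, ?_⟩, ?_, ?_⟩
  · exact mem_sdiff.2 ⟨mem_insert_self p A, fun h => hp (mem_filter.1 h).1⟩
  · rwa [Finset.sdiff_sdiff_eq_self hSA]
  intro x hx y hy
  rw [Finset.sdiff_sdiff_eq_self hSA] at hy
  obtain ⟨hyA, hpy⟩ := mem_filter.1 hy
  obtain ⟨hx, hxS⟩ := mem_sdiff.1 hx
  rcases mem_insert.1 hx with rfl | hxA
  · exact hpy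
  have hpx : d.val {p, x} = some a := hval x hxA fun h => hxS (mem_filter.2 ⟨hxA, h⟩)
  by_cases hxB : x ∈ B
  · exact hB.val_eq_of_not_hasBicolouredP4 hd₁ hd₂ ham hxA hyA (mem_sdiff.1 hy₀).1 (by tauto)
      hpx hpy hpy₀a
  · exact hB.val_eq_of_not_hasBicolouredP4 hd₁ hd₂ ham hxA hyA (hB.subset hx₀) (by tauto)
      hpx hpy ha

lemma IsCut.exists_isCut_insert (hd₁ : d.RainbowFree) (hd₂ : ¬ d.HasBicolouredP4)
    (hB : d.IsCut m A B) {p : X} (hp : p ∉ A) : ∃ m' B', d.IsCut m' (insert p A) B' := by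
  by_cases h₁ : ∀ x ∈ B, d.val {p, x} = some m
  · exact ⟨m, B, hB.insert_of_forall hp h₁⟩
  by_cases h₂ : ∀ y ∈ A \ B, d.val {p, y} = some m
  · exact ⟨m, A \ B, hB.compl.insert_of_forall hp h₂⟩
  push Not at h₁ h₂
  obtain ⟨x₀, hx₀, hpx₀⟩ := h₁
  obtain ⟨y₀, hy₀, hpy₀⟩ := h₂
  exact hB.exists_isCut_insert_of_ne hd₁ hd₂ hp hx₀ hy₀ hpx₀ hpy₀

theorem RainbowFree.exists_isCut (hd₁ : d.RainbowFree) (hd₂ : ¬ d.HasBicolouredP4)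
    (hA : 2 ≤ A.card) : ∃ m B, d.IsCut m A B := by
  induction A using Finset.induction_on with
  | empty => simp at hA
  | insert p A hp ih =>
    rw [card_insert_of_notMem hp] at hA
    rcases le_or_gt 2 A.card with hA₂ | hA₁
    · obtain ⟨m, B, hB⟩ := ih hA₂
      exact hB.exists_isCut_insert hd₁ hd₂ hp
    obtain ⟨q, rfl⟩ := card_eq_one.1 (by omega : A.card = 1)
    obtain ⟨m, hm⟩ := d.exists_val_eq_some (notMem_singleton.1 hp)
    exact ⟨m, {p}, isCut_insert_singleton hp (singleton_nonempty q)
      fun y hy => mem_singleton.1 hy ▸ hm⟩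

variable (d)

def OffColour (A : Finset X) (m : M) (x y : X) : Prop :=
  x ∈ A ∧ y ∈ A ∧ d.val {x, y} ≠ some m

open Classical in
noncomputable def component (A : Finset X) (m : M) (x : X) : Finset X :=
  A.filter (ReflTransGen (d.OffColour A m) x)

instance (A : Finset X) (m : M) : Std.Symm (d.OffColour A m) :=
  ⟨fun x y ⟨hx, hy, h⟩ => ⟨hy, hx, by rwa [pair_comm]⟩⟩

variable {d} {x y : X}

lemma mem_component : y ∈ d.component A m x ↔ y ∈ A ∧ ReflTransGen (d.OffColour A m) x y := by
  classical
  simp [component]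

lemma component_subset : d.component A m x ⊆ A :=
  fun _ hy => (mem_component.1 hy).1

lemma mem_component_self (hx : x ∈ A) : x ∈ d.component A m x :=
  mem_component.2 ⟨hx, .refl⟩

lemma component_eq_of_mem (h : y ∈ d.component A m x) : d.component A m y = d.component A m x := by
  obtain ⟨-, hxy⟩ := mem_component.1 h
  ext z
  simp only [mem_component]
  exact and_congr_right fun _ => ⟨(hxy.trans ·), (Std.Symm.symm _ _ hxy).trans⟩

lemma component_subset_of_closed (hx : x ∈ B)
    (hB : ∀ u ∈ B, ∀ v, d.OffColour A m u v → v ∈ B) : d.component A m x ⊆ B := by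
  intro y hy
  obtain ⟨-, hxy⟩ := mem_component.1 hy
  clear hy
  induction hxy with
  | refl => exact hx
  | tail _ huv ih => exact hB _ ih _ huv

lemma val_eq_of_notMem_component (hx : x ∈ A) (hy : y ∈ A) (h : y ∉ d.component A m x) :
    d.val {x, y} = some m := by
  by_contra hne
  exact h (mem_component.2 ⟨hy, .single ⟨hx, hy, hne⟩⟩)

lemma IsCut.component_subset (hB : d.IsCut m A B) (hx : x ∈ B) : d.component A m x ⊆ B :=
  component_subset_of_closed hx fun u hu v ⟨_, hv, hne⟩ =>
    by_contra fun hvB => hne (hB.val_eq u hu v (mem_sdiff.2 ⟨hv, hvB⟩))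

lemma IsCut.component_ssubset (hB : d.IsCut m A B) (hx : x ∈ A) : d.component A m x ⊂ A := by
  by_cases hxB : x ∈ B
  · exact Finset.ssubset_of_subset_of_ssubset (hB.component_subset hxB) hB.ssubset
  · exact Finset.ssubset_of_subset_of_ssubset (hB.compl.component_subset (mem_sdiff.2 ⟨hx, hxB⟩))
      hB.compl.ssubset

lemma not_isCut_component {C : Finset X} : ¬ d.IsCut m (d.component A m x) C := by
  intro hC
  obtain ⟨c, hc⟩ := hC.nonempty
  have hcx := component_eq_of_mem (hC.subset hc)
  refine ssubset_irrefl C (Finset.ssubset_of_ssubset_of_subset hC.ssubset ?_)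
  rw [← hcx]
  refine component_subset_of_closed hc fun u hu v huv => by_contra fun hvC => huv.2.2 ?_
  have hv : v ∈ d.component A m x := by
    rw [← component_eq_of_mem (hC.subset hu)]
    exact mem_component.2 ⟨huv.2.1, .single huv⟩
  exact hC.val_eq u hu v (mem_sdiff.2 ⟨hv, hvC⟩)

end SymbolicDissim2

namespace PhyloNetwork

variable {X M : Type} [Fintype X] [DecidableEq X] {N : PhyloNetwork X} {Y : Finset X}
  {u v w : N.V} {x y z : X}

lemma exists_isLca (N : PhyloNetwork X) (Y : Finset X) : ∃ v, N.IsLca Y v := by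
  let r : N.V → N.V → Prop := fun a b => TransGen N.adj b a
  have : Finite N.V := @Finite.of_fintype _ N.instFin
  have : IsTrans N.V r := ⟨fun _ _ _ h₁ h₂ => h₂.trans h₁⟩
  have : Std.Irrefl r := ⟨N.acyclic⟩
  obtain ⟨v, hv, hmin⟩ := (Finite.wellFounded_of_trans_of_irrefl r).has_min
    {v | ∀ x ∈ Y, x ∈ N.F v} ⟨N.root, fun x _ => N.connected _⟩
  exact ⟨v, hv, fun w hvw hw => hmin w hw (.single hvw)⟩

lemma IsLca.eq_of_reaches (hv : N.IsLca Y v) (hw : N.IsLca Y w) (hvw : N.reaches v w) :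
    v = w := by
  rcases hvw.cases_head with h | ⟨c, hvc, hcw⟩
  · exact h
  · exact absurd (fun x hx => hcw.trans (hw.1 x hx)) (hv.2 c hvc)

namespace IsRootedTree

lemma reaches_of_adj (hN : N.IsRootedTree) {p : N.V} (hpw : N.adj p w) (hvw : N.reaches v w)
    (hne : v ≠ w) : N.reaches v p := by
  rcases hvw.cases_tail with rfl | ⟨q, hvq, hqw⟩
  · exact absurd rfl hne
  · have hw : w ≠ N.root := fun h => N.root_no_in p (h ▸ hpw)
    exact (hN w hw).unique hqw hpw ▸ hvq

lemma reaches_total (hN : N.IsRootedTree) (hv : N.reaches v u) (hw : N.reaches w u) :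
    N.reaches v w ∨ N.reaches w v := by
  induction hv generalizing w with
  | refl => exact .inr hw
  | @tail b c hvb hbc ih =>
    by_cases hwc : w = c
    · exact .inl (hwc ▸ hvb.tail hbc)
    · exact ih (hN.reaches_of_adj hbc hw hwc)

lemma isLca_unique (hN : N.IsRootedTree) (hy : y ∈ Y) (hv : N.IsLca Y v) (hw : N.IsLca Y w) :
    v = w := by
  rcases hN.reaches_total (hv.1 y hy) (hw.1 y hy) with h | h
  · exact hv.eq_of_reaches hw h
  · exact (hw.eq_of_reaches hv h).symm

lemma isLca_of_transGen (hN : N.IsRootedTree) {a b : N.V} (ha : N.IsLca {x, y} a)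
    (hb : N.IsLca {x, z} b) (hab : TransGen N.adj a b) : N.IsLca {y, z} a := by
  have hbz : N.reaches b (N.leaf z) := hb.1 z (by simp)
  refine ⟨fun q hq => ?_, fun w haw hw => ?_⟩
  · rcases mem_insert.1 hq with rfl | hq
    · exact ha.1 q (by simp)
    · exact mem_singleton.1 hq ▸ hab.to_reflTransGen.trans hbz
  have hwb : N.reaches w b := by
    rcases hN.reaches_total (hw z (by simp)) hbz with hwb | hbw
    · exact hwb
    · by_cases hbw' : b = w
      · exact hbw' ▸ .refl
      · exact absurd (hab.trans_left (hN.reaches_of_adj haw hbw hbw')) (N.acyclic a)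
  refine ha.2 w haw fun q hq => ?_
  rcases mem_insert.1 hq with rfl | hq
  · exact hwb.trans (hb.1 q (by simp))
  · exact mem_singleton.1 hq ▸ hw y (by simp)

lemma isLca_triple (hN : N.IsRootedTree) {a b c : N.V} (ha : N.IsLca {x, y} a)
    (hb : N.IsLca {x, z} b) (hc : N.IsLca {y, z} c) :
    a = b ∨ (a = c ∧ TransGen N.adj a b) ∨ (b = c ∧ TransGen N.adj b a) := by
  have hy : y ∈ ({y, z} : Finset X) := mem_insert_self y {z}
  rcases hN.reaches_total (ha.1 x (by simp)) (hb.1 x (by simp)) with h | h <;>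
    rcases reflTransGen_iff_eq_or_transGen.1 h with rfl | h
  · exact .inl rfl
  · exact .inr (.inl ⟨hN.isLca_unique hy (hN.isLca_of_transGen ha hb h) hc, h⟩)
  · exact .inl rfl
  · have hb' := hN.isLca_of_transGen hb ha h
    rw [pair_comm] at hb'
    exact .inr (.inr ⟨hN.isLca_unique hy hb' hc, h⟩)

end IsRootedTree

namespace Represents2

variable {t : N.V → M} {d : SymbolicDissim2 X M}

lemma val_eq (h : N.Represents2 t d) (hxy : x ≠ y) (hv : N.IsLca {x, y} v) :
    d.val {x, y} = some (t v) :=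
  h _ (card_pair hxy) v hv

lemma rainbowFree (h : N.Represents2 t d) (hN : N.IsRootedTree) : d.RainbowFree := by
  intro x y z hxy hxz hyz
  obtain ⟨a, ha⟩ := N.exists_isLca {x, y}
  obtain ⟨b, hb⟩ := N.exists_isLca {x, z}
  obtain ⟨c, hc⟩ := N.exists_isLca {y, z}
  rw [h.val_eq hxy ha, h.val_eq hxz hb, h.val_eq hyz hc]
  rcases hN.isLca_triple ha hb hc with rfl | ⟨rfl, -⟩ | ⟨rfl, -⟩ <;> simp

lemma eq_and_transGen_of_val_ne (h : N.Represents2 t d) (hN : N.IsRootedTree) (hxy : x ≠ y)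
    (hxz : x ≠ z) (hyz : y ≠ z) {a b c : N.V} (ha : N.IsLca {x, y} a) (hb : N.IsLca {x, z} b)
    (hc : N.IsLca {y, z} c) (hba : d.val {x, z} ≠ d.val {x, y})
    (hbc : d.val {x, z} ≠ d.val {y, z}) : a = c ∧ TransGen N.adj a b := by
  rw [h.val_eq hxz hb, h.val_eq hxy ha] at hba
  rw [h.val_eq hxz hb, h.val_eq hyz hc] at hbc
  rcases hN.isLca_triple ha hb hc with rfl | hac | ⟨rfl, -⟩
  · exact absurd rfl hba
  · exact hac
  · exact absurd rfl hbc

lemma not_hasBicolouredP4 (h : N.Represents2 t d) (hN : N.IsRootedTree) :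
    ¬ d.HasBicolouredP4 := by
  rintro ⟨x, y, z, u, hxy, hxz, hxu, hyz, hyu, hzu, e₁, e₂, hne, e₃, e₄⟩
  have hyz' : d.val {y, z} = d.val {x, y} := e₁.symm
  have hzu' : d.val {z, u} = d.val {x, y} := (e₁.trans e₂).symm
  have hxz' : d.val {x, z} = d.val {z, x} := by rw [pair_comm]
  have hxu' : d.val {x, u} = d.val {z, x} := e₃.symm
  have huy' : d.val {u, y} = d.val {z, x} := (e₃.trans e₄).symm
  have hαβ : d.val {x, y} ≠ d.val {z, x} := hzu' ▸ hne
  obtain ⟨a, ha⟩ := N.exists_isLca {x, y}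
  obtain ⟨b, hb⟩ := N.exists_isLca {x, z}
  obtain ⟨c, hc⟩ := N.exists_isLca {y, z}
  obtain ⟨f, hf⟩ := N.exists_isLca {x, u}
  obtain ⟨g, hg⟩ := N.exists_isLca {u, y}
  obtain ⟨s, hs⟩ := N.exists_isLca {z, u}
  have hb' : N.IsLca {z, x} b := by rwa [pair_comm]
  have hab := (h.eq_and_transGen_of_val_ne hN hxy hxz hyz ha hb hc
    (by rw [hxz']; exact hαβ.symm) (by rw [hxz', hyz']; exact hαβ.symm)).2
  have hfa := (h.eq_and_transGen_of_val_ne hN hxu hxy hyu.symm hf ha hg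
    (by rw [hxu']; exact hαβ) (by rw [huy']; exact hαβ)).2
  have hbf := (h.eq_and_transGen_of_val_ne hN hxz.symm hzu hxu hb' hs hf
    hne (by rw [hzu', hxu']; exact hαβ)).1
  exact N.acyclic f (hfa.trans (hbf ▸ hab))

end Represents2

end PhyloNetwork

/-- A rule splitting every finite set `A` with at least two elements into at least two blocks,
`block A x` being the block containing `x`. -/
structure PartitionRule (X : Type) where
  block : Finset X → X → Finset X
  mem_block_self : ∀ {A : Finset X} {x : X}, x ∈ A → x ∈ block A x
  block_ssubset : ∀ {A : Finset X} {x : X}, 2 ≤ A.card → x ∈ A → block A x ⊂ A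
  block_eq_of_mem : ∀ {A : Finset X} {x y : X}, y ∈ block A x → block A y = block A x

namespace PartitionRule

variable {X : Type} (R : PartitionRule X)

def Child (A B : Finset X) : Prop :=
  2 ≤ A.card ∧ ∃ x ∈ A, B = R.block A x

def IsCluster [Fintype X] (A : Finset X) : Prop :=
  ReflTransGen R.Child univ A

/-- The descending chain of the clusters containing `x`. -/
def chain [Fintype X] (x : X) (k : ℕ) : Finset X :=
  (fun A => if 2 ≤ A.card then R.block A x else A)^[k] univ

variable {R} {A B : Finset X} {x : X}

lemma Child.ssubset (h : R.Child A B) : B ⊂ A := by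
  obtain ⟨hA, x, hx, rfl⟩ := h
  exact R.block_ssubset hA hx

lemma Child.nonempty (h : R.Child A B) : B.Nonempty := by
  obtain ⟨-, x, hx, rfl⟩ := h
  exact ⟨x, R.mem_block_self hx⟩

lemma ssubset_of_transGen_child (h : TransGen R.Child A B) : B ⊂ A := by
  induction h with
  | single h => exact h.ssubset
  | tail _ h ih => exact h.ssubset.trans ih

lemma subset_of_reflTransGen_child (h : ReflTransGen R.Child A B) : B ⊆ A := by
  rcases reflTransGen_iff_eq_or_transGen.1 h with rfl | h
  · exact Subset.rfl
  · exact (ssubset_of_transGen_child h).subset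

lemma reflTransGen_child_singleton (hx : x ∈ A) : ReflTransGen R.Child A {x} := by
  induction A using Finset.strongInduction with
  | H A ih =>
    by_cases hA : 2 ≤ A.card
    · exact .head ⟨hA, x, hx, rfl⟩
        (ih _ (R.block_ssubset hA hx) (R.mem_block_self hx))
    · rw [eq_singleton_iff_unique_mem.2 ⟨hx, fun y hy => card_le_one.1 (by omega) y hy x hx⟩]

lemma exists_block_ne (hA : 2 ≤ A.card) : ∃ x ∈ A, ∃ y ∈ A, R.block A x ≠ R.block A y := by
  obtain ⟨x, hx⟩ := card_pos.1 (by omega : 0 < A.card)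
  obtain ⟨y, hy, hyx⟩ := exists_of_ssubset (R.block_ssubset hA hx)
  exact ⟨x, hx, y, hy, fun h => hyx (h ▸ R.mem_block_self hy)⟩

variable [Fintype X]

lemma IsCluster.eq_univ_or_nonempty (hA : R.IsCluster A) : A = univ ∨ A.Nonempty := by
  rcases hA.cases_tail with h | ⟨B, -, hB⟩
  · exact .inl h
  · exact .inr hB.nonempty

lemma mem_chain (x : X) (k : ℕ) : x ∈ R.chain x k := by
  induction k with
  | zero => exact mem_univ x
  | succ k ih =>
    rw [chain, Function.iterate_succ_apply', ← chain]
    split_ifs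
    · exact R.mem_block_self ih
    · exact ih

lemma chain_succ_of_two_le (x : X) {k : ℕ} (h : 2 ≤ (R.chain x k).card) :
    R.chain x (k + 1) = R.block (R.chain x k) x := by
  rw [chain, Function.iterate_succ_apply', ← chain, if_pos h]

lemma chain_antitone (x : X) : Antitone (R.chain x) := by
  refine antitone_nat_of_succ_le fun k => ?_
  by_cases h : 2 ≤ (R.chain x k).card
  · rw [R.chain_succ_of_two_le x h]
    exact (R.block_ssubset h (R.mem_chain x k)).subset
  · rw [chain, Function.iterate_succ_apply', ← chain, if_neg h]

lemma IsCluster.exists_chain_eq (hA : R.IsCluster A) (hx : x ∈ A) : ∃ k, R.chain x k = A := by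
  induction hA with
  | refl => exact ⟨0, rfl⟩
  | @tail B C _ hBC ih =>
    obtain ⟨k, rfl⟩ := ih (hBC.ssubset.subset hx)
    obtain ⟨hB, y, -, rfl⟩ := hBC
    exact ⟨k + 1, by rw [R.chain_succ_of_two_le x hB, R.block_eq_of_mem hx]⟩

/-- Clusters through a common point are nested, so a cluster has at most one parent. -/
lemma IsCluster.eq_of_child (hA : R.IsCluster A) (hB : R.IsCluster B) {C : Finset X}
    (hAC : R.Child A C) (hBC : R.Child B C) : A = B := by
  obtain ⟨x, hx⟩ := hAC.nonempty
  have hchild : ∀ {A k}, R.Child A C → R.chain x k = A → R.chain x (k + 1) = C := by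
    rintro _ k ⟨hA, y, -, rfl⟩ rfl
    rw [R.chain_succ_of_two_le x hA, R.block_eq_of_mem hx]
  have hle : ∀ {A B k l}, R.Child A C → R.Child B C → R.chain x k = A → R.chain x l = B →
      k ≤ l := by
    intro A B k l hAC hBC hk hl
    by_contra! hlk
    refine not_ssubset_of_subset ?_ hAC.ssubset
    rw [← hk, ← hchild hBC hl]
    exact R.chain_antitone x hlk
  obtain ⟨k, hk⟩ := hA.exists_chain_eq (hAC.ssubset.subset hx)
  obtain ⟨l, hl⟩ := hB.exists_chain_eq (hBC.ssubset.subset hx)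
  rw [← hk, ← hl, le_antisymm (hle hAC hBC hk hl) (hle hBC hAC hl hk)]

lemma IsCluster.reflTransGen_mk (hA : R.IsCluster A) (h : ReflTransGen R.Child A B) :
    ReflTransGen (fun P Q : {C // R.IsCluster C} => R.Child P.1 Q.1) ⟨A, hA⟩ ⟨B, hA.trans h⟩ := by
  induction h with
  | refl => exact .refl
  | tail _ hBC ih => exact ih.tail hBC

lemma not_existsUnique_child (P : {C // R.IsCluster C}) :
    ¬ ∃! Q : {C // R.IsCluster C}, R.Child P.1 Q.1 := by
  rintro ⟨Q, hQ, huniq⟩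
  obtain ⟨x, hx, y, hy, hxy⟩ := R.exists_block_ne hQ.1
  have hchild : ∀ z ∈ P.1, R.Child P.1 (R.block P.1 z) := fun z hz => ⟨hQ.1, z, hz, rfl⟩
  refine hxy (congrArg Subtype.val ((huniq ⟨_, P.2.tail (hchild x hx)⟩ (hchild x hx)).trans
    (huniq ⟨_, P.2.tail (hchild y hy)⟩ (hchild y hy)).symm))

lemma IsCluster.exists_child (hA : R.IsCluster A) (h : 2 ≤ A.card) :
    ∃ Q : {C // R.IsCluster C}, R.Child A Q.1 := by
  obtain ⟨x, hx⟩ := card_pos.1 (by omega : 0 < A.card)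
  exact ⟨⟨_, hA.tail ⟨h, x, hx, rfl⟩⟩, h, x, hx, rfl⟩

lemma IsCluster.eq_univ_or_eq_singleton (hA : R.IsCluster A) (h : A.card < 2) :
    A = univ ∨ ∃ x, A = {x} := by
  refine hA.eq_univ_or_nonempty.imp_right fun hne => card_eq_one.1 ?_
  have := hne.card_pos
  omega

variable [DecidableEq X]

variable (R) in
noncomputable def tree : PhyloNetwork X where
  V := {A // R.IsCluster A}
  instFin := Fintype.ofFinite _
  instDec := Classical.decEq _
  adj P Q := R.Child P.1 Q.1
  root := ⟨univ, .refl⟩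
  leaf x := ⟨{x}, R.reflTransGen_child_singleton (mem_univ x)⟩
  acyclic P h := ssubset_irrefl P.1 (R.ssubset_of_transGen_child (h.lift Subtype.val fun _ _ => id))
  root_no_in P h := not_ssubset_of_subset (subset_univ P.1) h.ssubset
  connected P := IsCluster.reflTransGen_mk .refl P.2
  leaf_inj _ _ h := singleton_injective (congrArg Subtype.val h)
  leaf_no_out x _ h := by simpa using h.1
  leaves_only P h := by
    have hP : P.1.card < 2 := by
      by_contra! hP
      obtain ⟨Q, hQ⟩ := P.2.exists_child hP
      exact h Q hQ
    rcases P.2.eq_univ_or_eq_singleton hP with hP | ⟨x, hx⟩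
    · exact .inl (Subtype.ext hP)
    · exact .inr ⟨x, Subtype.ext hx.symm⟩
  no_inout_one P h := not_existsUnique_child P h.2

lemma tree_reaches_iff {P Q : R.tree.V} : R.tree.reaches P Q ↔ ReflTransGen R.Child P.1 Q.1 :=
  ⟨fun h => h.lift (p := R.Child) Subtype.val fun _ _ => id, IsCluster.reflTransGen_mk P.2⟩

lemma mem_tree_F_iff {P : R.tree.V} {x : X} : x ∈ R.tree.F P ↔ x ∈ P.1 := by
  refine ⟨fun h => ?_, fun h => tree_reaches_iff.2 (R.reflTransGen_child_singleton h)⟩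
  exact singleton_subset_iff.1 (subset_of_reflTransGen_child (tree_reaches_iff.1 h))

lemma tree_isRootedTree : R.tree.IsRootedTree := by
  intro P hP
  rcases P.2.cases_tail with h | ⟨A, hA, hAP⟩
  · exact absurd (Subtype.ext h) hP
  · exact ⟨⟨A, hA⟩, hAP, fun Q hQ => Subtype.ext (Q.2.eq_of_child hA hQ hAP)⟩

lemma notMem_block_of_isLca {P : R.tree.V} {x y : X} (hxy : x ≠ y) (h : R.tree.IsLca {x, y} P) :
    x ∈ P.1 ∧ y ∈ P.1 ∧ y ∉ R.block P.1 x := by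
  have hx : x ∈ P.1 := mem_tree_F_iff.1 (h.1 x (mem_insert_self x {y}))
  have hy : y ∈ P.1 := mem_tree_F_iff.1 (h.1 y (mem_insert_of_mem (mem_singleton_self y)))
  refine ⟨hx, hy, fun hyx => ?_⟩
  have hP : 2 ≤ P.1.card := one_lt_card.2 ⟨x, hx, y, hy, hxy⟩
  refine h.2 ⟨_, P.2.tail ⟨hP, x, hx, rfl⟩⟩ ⟨hP, x, hx, rfl⟩ fun z hz => mem_tree_F_iff.2 ?_
  rcases mem_insert.1 hz with rfl | hz
  · exact R.mem_block_self hx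
  · exact mem_singleton.1 hz ▸ hyx

lemma two_le_card_of_not_isLeafV {P Q : R.tree.V} (hPQ : R.tree.adj P Q)
    (hQ : ¬ R.tree.IsLeafV Q) : 2 ≤ Q.1.card := by
  by_contra! h
  have hne : Q.1.Nonempty := Child.nonempty (R := R) hPQ
  obtain ⟨x, hx⟩ := card_eq_one.1 (show Q.1.card = 1 by have := hne.card_pos; omega)
  exact hQ ⟨x, Subtype.ext hx.symm⟩

end PartitionRule

namespace SymbolicDissim2

variable {X M : Type} [DecidableEq X] (d : SymbolicDissim2 X M)

noncomputable def componentRule (μ : Finset X → M)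
    (hμ : ∀ A : Finset X, 2 ≤ A.card → ∃ B, d.IsCut (μ A) A B) : PartitionRule X where
  block A x := d.component A (μ A) x
  mem_block_self := mem_component_self
  block_ssubset hA hx := (hμ _ hA).elim fun _ hB => hB.component_ssubset hx
  block_eq_of_mem := component_eq_of_mem

variable [Fintype X] (μ : Finset X → M) (hμ : ∀ A : Finset X, 2 ≤ A.card → ∃ B, d.IsCut (μ A) A B)

lemma componentRule_represents2 : (d.componentRule μ hμ).tree.Represents2 (fun P => μ P.1) d := by
  intro Y hY P hP
  obtain ⟨x, y, hxy, rfl⟩ := card_eq_two.1 hY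
  obtain ⟨hx, hy, hyx⟩ := PartitionRule.notMem_block_of_isLca hxy hP
  exact val_eq_of_notMem_component hx hy hyx

lemma componentRule_discriminating :
    (d.componentRule μ hμ).tree.Discriminating (fun P => μ P.1) := by
  intro P Q hPQ hQ hμPQ
  obtain ⟨B, hB⟩ := hμ Q.1 (PartitionRule.two_le_card_of_not_isLeafV hPQ hQ)
  obtain ⟨-, x, -, hQx⟩ := hPQ
  rw [← show μ P.1 = μ Q.1 from hμPQ, hQx] at hB
  exact not_isCut_component hB

theorem exists_discriminating_tree [Nonempty M] (hd₁ : d.RainbowFree)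
    (hd₂ : ¬ d.HasBicolouredP4) : ∃ (N : PhyloNetwork X) (t : N.V → M),
      N.IsRootedTree ∧ N.Represents2 t d ∧ N.Discriminating t := by
  have hcut : ∀ A : Finset X, ∃ m, 2 ≤ A.card → ∃ B, d.IsCut m A B := by
    intro A
    by_cases hA : 2 ≤ A.card
    · obtain ⟨m, B, hB⟩ := hd₁.exists_isCut hd₂ hA
      exact ⟨m, fun _ => ⟨B, hB⟩⟩
    · exact ⟨Classical.arbitrary M, fun h => absurd h hA⟩
  choose μ hμ using hcut
  exact ⟨_, _, PartitionRule.tree_isRootedTree, d.componentRule_represents2 μ hμ,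
    d.componentRule_discriminating μ hμ⟩

end SymbolicDissim2

theorem discriminating_tree_representation_iff_symbolic_ultrametric_general
    {X M : Type} [Fintype X] [DecidableEq X] [DecidableEq M]
    (hX : 3 ≤ Fintype.card X) (d : SymbolicDissim2 X M) :
    (∃ (N : PhyloNetwork X) (t : N.V → M),
        N.IsRootedTree ∧ N.Represents2 t d ∧ N.Discriminating t) ↔
      ((∀ x y z : X, x ≠ y → x ≠ z → y ≠ z →
          ({d.val {x, y}, d.val {x, z}, d.val {y, z}} : Finset (Option M)).card ≤ 2) ∧
        ¬ ∃ x y z u : X, x ≠ y ∧ x ≠ z ∧ x ≠ u ∧ y ≠ z ∧ y ≠ u ∧ z ≠ u ∧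
          d.val {x, y} = d.val {y, z} ∧ d.val {y, z} = d.val {z, u} ∧
          d.val {z, u} ≠ d.val {z, x} ∧
          d.val {z, x} = d.val {x, u} ∧ d.val {x, u} = d.val {u, y}) := by
  simp only [Finset.card_triple_le_two_iff]
  refine ⟨fun ⟨N, t, hN, hrep, _⟩ => ⟨hrep.rainbowFree hN, hrep.not_hasBicolouredP4 hN⟩,
    fun ⟨hd₁, hd₂⟩ => ?_⟩
  obtain ⟨x, y, hxy⟩ := Fintype.exists_pair_of_one_lt_card (by omega : 1 < Fintype.card X)
  obtain ⟨m, -⟩ := d.exists_val_eq_some hxy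
  have : Nonempty M := ⟨m⟩
  exact d.exists_discriminating_tree hd₁ hd₂

/-- Böcker–Dress: a symbolic 2-dissimilarity on `X` (`|X| ≥ 3`) has a
discriminating symbolic tree representation iff it is a symbolic ultrametric,
i.e. satisfies (U1) and (U2). -/
theorem discriminating_tree_representation_iff_symbolic_ultrametric
    {X M : Type} [Fintype X] [DecidableEq X] [Fintype M] [DecidableEq M]
    (hX : 3 ≤ Fintype.card X) (d : SymbolicDissim2 X M) :
    (∃ (N : PhyloNetwork X) (t : N.V → M),
        N.IsRootedTree ∧ N.Represents2 t d ∧ N.Discriminating t) ↔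
      ((∀ x y z : X, x ≠ y → x ≠ z → y ≠ z →
          ({d.val {x, y}, d.val {x, z}, d.val {y, z}} : Finset (Option M)).card ≤ 2) ∧
        ¬ ∃ x y z u : X, x ≠ y ∧ x ≠ z ∧ x ≠ u ∧ y ≠ z ∧ y ≠ u ∧ z ≠ u ∧
          d.val {x, y} = d.val {y, z} ∧ d.val {y, z} = d.val {z, u} ∧
          d.val {z, u} ≠ d.val {z, x} ∧
          d.val {z, x} = d.val {x, u} ∧ d.val {x, u} = d.val {u, y}) :=
  discriminating_tree_representation_iff_symbolic_ultrametric_general hX d
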